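/- arXiv:2304.06498 — 2 statements merged into one kernel-verified Lean document; each statement's English description precedes it below -/
import Mathlib

section
/- If x → x' is the M-move from a position x with B(x) even and B(x) > 0, then B(x') = B(x) − 1. -/
/-- `z` is a basic position with parameter `b`: coordinate sum `k*b`, all coordinates
at most `b`, all coordinates even if `b` is even, exactly one even if `b` is odd. -/
def IsBasic (k : ℕ) (z : Fin (k+1) → ℕ) (b : ℕ) : Prop :=
  (∑ i, z i) = k * b ∧ (∀ i, z i ≤ b) ∧
    (Even b → ∀ i, Even (z i)) ∧ (Odd b → ∃! i, Even (z i))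

/-- `Pre k y x` means `y ⪯ x`: the sorted vector of `y` is componentwise ≤ that of `x`. -/
def Pre (k : ℕ) (y x : Fin (k+1) → ℕ) : Prop :=
  ∀ i, (y ∘ Tuple.sort y) i ≤ (x ∘ Tuple.sort x) i

/-- `BVal k x = max { b : some basic z with parameter b satisfies z ⪯ x }`. -/
noncomputable def BVal (k : ℕ) (x : Fin (k+1) → ℕ) : ℕ :=
  sSup {b | ∃ z, IsBasic k z b ∧ Pre k z x}

/-- A move in NIM(k+1,k): keep coordinate `i`, decrease every other (positive) coordinate by 1. -/
def MoveK (k : ℕ) (x y : Fin (k+1) → ℕ) : Prop :=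
  ∃ i, (∀ j, j ≠ i → 0 < x j) ∧ ∀ j, y j = if j = i then x j else x j - 1

/-- The M-move: keep a smallest even coordinate if one exists, otherwise keep a
largest coordinate; decrease the other k (positive) coordinates by 1. -/
def MMove (k : ℕ) (x y : Fin (k+1) → ℕ) : Prop :=
  ∃ i, (∀ j, j ≠ i → 0 < x j) ∧
    ((∃ j, Even (x j)) → Even (x i) ∧ ∀ j, Even (x j) → x i ≤ x j) ∧
    ((∀ j, Odd (x j)) → ∀ j, x j ≤ x i) ∧
    (∀ j, y j = if j = i then x j else x j - 1)

/-- Exceptional position: all coordinates odd, all `< m`, and `|x| = k*m + k - 1`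
for some even `m`. -/
def Exceptional (k : ℕ) (x : Fin (k+1) → ℕ) : Prop :=
  ∃ m, Even m ∧ (∀ i, Odd (x i)) ∧ (∀ i, x i < m) ∧ (∑ i, x i) = k * m + k - 1

/-- `MVal k x m`: playing the M-rule from `x`, the game ends after exactly `m` moves. -/
inductive MVal (k : ℕ) : (Fin (k+1) → ℕ) → ℕ → Prop
  | zero (x) : (¬ ∃ y, MoveK k x y) → MVal k x 0
  | succ (x y m) : MMove k x y → MVal k y m → MVal k x (m + 1)


/-!
A basic position `w` of parameter `b` has coordinate deficits `b - w m` summing to `b`, so any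
two of its coordinates add up to at least `b`; for even `b` all its coordinates are even.

Let `b = B(x)` be even and let the move keep coordinate `i`. Lowering: below `x` sits a basic
`w` of parameter `b`; subtracting one from every coordinate of `w` except one, `p`, gives a
basic position of odd parameter `b - 1` (its only even coordinate is `w p`), and it lies below
`x'` as soon as `w p < b`, `w` is positive off `p` and `w p ≤ x' p`. Such a `p` exists: the
only obstruction to `p = i` is `w i = b`, and then a coordinate `j ≠ i` with `w j < b` must
have `w j < x j`, since `w j = x j` would make `x j` an even coordinate smaller than `x i`,
contradicting the M-rule. Raising: a basic `w' ≤ x'` of parameter `b` would give, after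
adding one to every coordinate except `i`, a basic position of parameter `b + 1` below `x`.
-/

open Finset

theorem comp_sort_le_comp_sort {α : Type*} [LinearOrder α] {n : ℕ} {y x : Fin n → α}
    (h : y ≤ x) (i : Fin n) : (y ∘ Tuple.sort y) i ≤ (x ∘ Tuple.sort x) i := by
  set U := (Ici i).image (Tuple.sort y)
  set W := (Iic i).image (Tuple.sort x)
  -- `U` indexes the `n - i` largest values of `y`, `W` the `i + 1` smallest values of `x`
  obtain ⟨m, hm⟩ : (U ∩ W).Nonempty := by
    have hU : #U = n - i := by rw [card_image_of_injective _ (Equiv.injective _), Fin.card_Ici]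
    have hW : #W = i + 1 := by rw [card_image_of_injective _ (Equiv.injective _), Fin.card_Iic]
    have := card_inter_add_card_union U W
    have := card_le_univ (U ∪ W)
    rw [← card_pos]
    simp only [Fintype.card_fin] at *
    omega
  obtain ⟨a, ha, rfl⟩ := mem_image.mp (mem_inter.mp hm).1
  obtain ⟨c, hc, hca⟩ := mem_image.mp (mem_inter.mp hm).2
  calc (y ∘ Tuple.sort y) i ≤ (y ∘ Tuple.sort y) a := Tuple.monotone_sort y (mem_Ici.mp ha)
    _ ≤ x (Tuple.sort y a) := h _
    _ = (x ∘ Tuple.sort x) c := by simp [hca]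
    _ ≤ (x ∘ Tuple.sort x) i := Tuple.monotone_sort x (mem_Iic.mp hc)

theorem sum_eq_sum_add_of_succ_off {n : ℕ} (p : Fin (n+1)) {f g : Fin (n+1) → ℕ}
    (hp : g p = f p) (h : ∀ m ≠ p, g m = f m + 1) : ∑ m, g m = ∑ m, f m + n := by
  rw [← add_sum_erase _ g (mem_univ p), ← add_sum_erase _ f (mem_univ p),
    sum_congr rfl fun m hm => h m (ne_of_mem_erase hm), sum_add_distrib, sum_const,
    card_erase_of_mem (mem_univ p), card_univ, Fintype.card_fin, hp, smul_eq_mul, mul_one,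
    add_tsub_cancel_right, add_assoc]

section Basic

variable {k b : ℕ} {w : Fin (k+1) → ℕ}

theorem IsBasic.comp_perm (hw : IsBasic k w b) (σ : Equiv.Perm (Fin (k+1))) :
    IsBasic k (w ∘ σ) b := by
  obtain ⟨hsum, hle, heven, hodd⟩ := hw
  refine ⟨by rw [← hsum]; exact Equiv.sum_comp σ w, fun i => hle _, fun hb i => heven hb _,
    fun hb => ?_⟩
  obtain ⟨i₀, hi₀, huniq⟩ := hodd hb
  exact ⟨σ.symm i₀, by simpa using hi₀, fun m hm => by simp [← huniq (σ m) hm]⟩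

theorem IsBasic.sum_sub_eq (hw : IsBasic k w b) : ∑ m, (b - w m) = b := by
  have hadd : ∑ m, (b - w m) + ∑ m, w m = (k + 1) * b := by
    rw [← sum_add_distrib]
    simp [Nat.sub_add_cancel (hw.2.1 _)]
  rw [hw.1, add_mul, one_mul] at hadd
  omega

theorem IsBasic.le_add {j m : Fin (k+1)} (hw : IsBasic k w b) (hjm : j ≠ m) :
    b ≤ w j + w m := by
  have := add_le_sum (f := fun m => b - w m) (fun _ _ => Nat.zero_le _) (mem_univ j)
    (mem_univ m) hjm
  rw [hw.sum_sub_eq] at this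
  omega

theorem IsBasic.exists_ne_lt {i : Fin (k+1)} (hw : IsBasic k w b) (hb : 0 < b) (hi : w i = b) :
    ∃ j ≠ i, w j < b := by
  by_contra! hge
  have : ∑ m, (b - w m) = 0 :=
    sum_eq_zero fun j _ => if hj : j = i then by simp [hj, hi] else by simp [hge j hj]
  rw [hw.sum_sub_eq] at this
  omega

theorem IsBasic.succ_off (hw : IsBasic k w b) (hb : Even b) (i : Fin (k+1)) :
    IsBasic k (fun m => if m = i then w m else w m + 1) (b + 1) := by
  obtain ⟨hsum, hle, heven, -⟩ := hw
  refine ⟨?_, fun m => ?_, fun h => absurd hb (Nat.even_add_one.mp h), fun _ => ⟨i, ?_, ?_⟩⟩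
  · rw [sum_eq_sum_add_of_succ_off i (f := w) (by simp) fun m hm => by simp [hm], hsum,
      mul_add_one]
  · dsimp only
    split_ifs <;> linarith [hle m]
  · simpa using heven hb i
  · intro m hm
    by_contra hmi
    simp only [hmi, if_false, Nat.even_add_one] at hm
    exact hm (heven hb m)

theorem IsBasic.pred_off {p : Fin (k+1)} (hw : IsBasic k w b) (hb : Even b) (hp : w p < b)
    (hpos : ∀ m ≠ p, 0 < w m) :
    IsBasic k (fun m => if m = p then w m else w m - 1) (b - 1) := by
  obtain ⟨hsum, hle, heven, -⟩ := hw
  have hodd : Odd (b - 1) := Nat.Even.sub_odd (by omega) hb odd_one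
  refine ⟨?_, fun m => ?_, fun h => absurd hodd (Nat.not_odd_iff_even.mpr h),
    fun _ => ⟨p, ?_, ?_⟩⟩
  · have := sum_eq_sum_add_of_succ_off p (f := fun m => if m = p then w m else w m - 1)
      (g := w) (by simp) fun m hm => by have := hpos m hm; simp [hm]; omega
    rw [hsum] at this
    have : k * (b - 1) + k = k * b := by rw [← mul_add_one, Nat.sub_add_cancel (by omega)]
    linarith
  · dsimp only
    split_ifs with hm
    · subst hm; omega
    · have := hle m; omega
  · simpa using heven hb p
  · intro m hm
    by_contra hmp
    simp only [hmp, if_false] at hm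
    exact Nat.not_odd_iff_even.mpr hm (Nat.Even.sub_odd (hpos m hmp) (heven hb m) odd_one)

end Basic

section Params

variable {k b : ℕ} {x x' : Fin (k+1) → ℕ}

def basicParams (k : ℕ) (x : Fin (k+1) → ℕ) : Set ℕ :=
  {b | ∃ z, IsBasic k z b ∧ Pre k z x}

theorem Pre.exists_perm_le {z : Fin (k+1) → ℕ} (h : Pre k z x) :
    ∃ σ : Equiv.Perm (Fin (k+1)), z ∘ σ ≤ x :=
  ⟨(Tuple.sort x).symm.trans (Tuple.sort z), fun i => by
    simpa using h ((Tuple.sort x).symm i)⟩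

theorem mem_basicParams_iff : b ∈ basicParams k x ↔ ∃ w, IsBasic k w b ∧ w ≤ x := by
  constructor
  · rintro ⟨z, hz, hpre⟩
    obtain ⟨σ, hσ⟩ := hpre.exists_perm_le
    exact ⟨z ∘ σ, hz.comp_perm σ, hσ⟩
  · rintro ⟨w, hw, hle⟩
    exact ⟨w, hw, comp_sort_le_comp_sort hle⟩

theorem zero_mem_basicParams : 0 ∈ basicParams k x :=
  mem_basicParams_iff.mpr ⟨0, ⟨by simp, fun _ => le_rfl, fun _ _ => Even.zero,
    fun h => absurd h (by decide)⟩, fun _ => Nat.zero_le _⟩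

theorem basicParams_mono (h : x' ≤ x) : basicParams k x' ⊆ basicParams k x := fun _ hb => by
  obtain ⟨w, hw, hle⟩ := mem_basicParams_iff.mp hb
  exact mem_basicParams_iff.mpr ⟨w, hw, hle.trans h⟩

theorem bddAbove_basicParams_of_BVal_pos (h : 0 < BVal k x) : BddAbove (basicParams k x) := by
  by_contra hb
  exact h.ne' (Nat.sSup_of_not_bddAbove hb)

theorem BVal_mem_basicParams (h : BddAbove (basicParams k x)) : BVal k x ∈ basicParams k x :=
  Nat.sSup_mem ⟨0, zero_mem_basicParams⟩ h

theorem le_BVal_of_mem_basicParams (h : BddAbove (basicParams k x)) (hb : b ∈ basicParams k x) :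
    b ≤ BVal k x :=
  le_csSup h hb

end Params

section Moves

variable {k b : ℕ} {x x' : Fin (k+1) → ℕ}

theorem MMove.moveK (h : MMove k x x') : MoveK k x x' :=
  let ⟨i, hpos, _, _, hx'⟩ := h
  ⟨i, hpos, hx'⟩

theorem MoveK.le (h : MoveK k x x') : x' ≤ x := by
  obtain ⟨i, -, hx'⟩ := h
  intro j
  rw [hx' j]
  split_ifs
  exacts [le_rfl, Nat.sub_le _ _]

theorem succ_mem_basicParams_of_moveK (h : MoveK k x x') (hb : Even b)
    (hmem : b ∈ basicParams k x') : b + 1 ∈ basicParams k x := by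
  obtain ⟨i, hpos, hx'⟩ := h
  obtain ⟨w, hw, hle⟩ := mem_basicParams_iff.mp hmem
  refine mem_basicParams_iff.mpr ⟨_, hw.succ_off hb i, fun m => ?_⟩
  have hwm : w m ≤ x' m := hle m
  rw [hx' m] at hwm
  dsimp only
  split_ifs at hwm ⊢ with hmi
  · exact hwm
  · have := hpos m hmi
    omega

theorem exists_pred_off_index {i : Fin (k+1)} {w : Fin (k+1) → ℕ} (hw : IsBasic k w b)
    (hb : Even b) (hb0 : 0 < b) (hle : w ≤ x) (hpos : ∀ j ≠ i, 0 < x j)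
    (hmin : (∃ j, Even (x j)) → Even (x i) ∧ ∀ j, Even (x j) → x i ≤ x j) :
    ∃ p, w p < b ∧ (∀ m ≠ p, 0 < w m) ∧ (p = i ∨ w p < x p) := by
  by_cases hzero : ∃ j ≠ i, w j = 0
  · obtain ⟨j, hji, hj⟩ := hzero
    refine ⟨j, by omega, fun m hmj => ?_, Or.inr (hj ▸ hpos j hji)⟩
    have := hw.le_add hmj.symm
    omega
  push Not at hzero
  by_cases hwi : w i < b
  · exact ⟨i, hwi, fun m hm => Nat.pos_of_ne_zero (hzero m hm), Or.inl rfl⟩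
  have hwi : w i = b := le_antisymm (hw.2.1 i) (not_lt.mp hwi)
  obtain ⟨j, hji, hjb⟩ := hw.exists_ne_lt hb0 hwi
  refine ⟨j, hjb, fun m _ => ?_, Or.inr (lt_of_le_of_ne (hle j) fun hwx => ?_)⟩
  · by_cases hmi : m = i
    · rw [hmi, hwi]
      exact hb0
    · exact Nat.pos_of_ne_zero (hzero m hmi)
  · have hxj : Even (x j) := hwx ▸ hw.2.2.1 hb j
    have hij : x i ≤ x j := (hmin ⟨j, hxj⟩).2 j hxj
    have hwxi : w i ≤ x i := hle i
    omega

theorem pred_mem_basicParams_of_mmove (h : MMove k x x') (hb : Even b) (hb0 : 0 < b)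
    (hmem : b ∈ basicParams k x) : b - 1 ∈ basicParams k x' := by
  obtain ⟨i, hpos, hmin, -, hx'⟩ := h
  obtain ⟨w, hw, hle⟩ := mem_basicParams_iff.mp hmem
  obtain ⟨p, hpb, hwpos, hpx⟩ := exists_pred_off_index hw hb hb0 hle hpos hmin
  refine mem_basicParams_iff.mpr ⟨_, hw.pred_off hb hpb hwpos, fun m => ?_⟩
  have hwm : w m ≤ x m := hle m
  rw [hx' m]
  dsimp only
  split_ifs with hmp hmi hmi
  · exact hwm
  · subst hmp
    rcases hpx with rfl | hpx
    exacts [absurd rfl hmi, by omega]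
  · omega
  · omega

end Moves

theorem stmt15_general (k : ℕ) (x x' : Fin (k+1) → ℕ)
    (heven : Even (BVal k x)) (hpos : 0 < BVal k x) (h : MMove k x x') :
    BVal k x' = BVal k x - 1 := by
  have hbdd := bddAbove_basicParams_of_BVal_pos hpos
  have hsub := basicParams_mono h.moveK.le
  have hbdd' := hbdd.mono hsub
  have hlower : BVal k x - 1 ≤ BVal k x' := le_BVal_of_mem_basicParams hbdd'
    (pred_mem_basicParams_of_mmove h heven hpos (BVal_mem_basicParams hbdd))
  have hupper : BVal k x' ≤ BVal k x := csSup_le_csSup hbdd ⟨0, zero_mem_basicParams⟩ hsub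
  have hne : BVal k x' ≠ BVal k x := fun heq => by
    have hmem := BVal_mem_basicParams hbdd'
    rw [heq] at hmem
    exact Nat.not_succ_le_self _ (le_BVal_of_mem_basicParams hbdd
      (succ_mem_basicParams_of_moveK h.moveK heven hmem))
  omega

theorem stmt15 (k : ℕ) (hk : 2 ≤ k) (x x' : Fin (k+1) → ℕ)
    (heven : Even (BVal k x)) (hpos : 0 < BVal k x) (h : MMove k x x') :
    BVal k x' = BVal k x - 1 :=
  stmt15_general k x x' heven hpos h
end

section
/- If x → x' is the M-move from a non-exceptional position x with B(x) odd, then B(x') = B(x) − 1. -/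
/-!
Let `b = B(x)`, which is odd, and let `i` be the coordinate kept by the M-move, so `x' ≤ x`
and `B(x') ≤ b`. Call `c` feasible for `y` if some basic `z` with parameter `c` has `z ⪯ y`;
feasibility is a counting condition on capped coordinates:
an even `m` is feasible for `y` as soon as `k * m ≤ ∑ j, evenCap m (y j)`, and an odd `b`
feasible for `y` forces `k * b ≤ ∑ j, mixedCap b e y j` for some index `e`.

From the odd condition for `x`, every coordinate other than `i` costs at most one unit of the
even condition at `b - 1` for `x'`; when `e ≠ i` the pair `(e, i)` together costs at most one
because `x i` is a smallest even coordinate whenever `x e` is even. So `b - 1` is feasible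
for `x'`. If `b` were feasible for `x'`, its odd condition would contradict the failure of the
even condition at `b + 1` for `x` (which, by parity, fails by at least two), except when all
coordinates of `x` are odd and at most `b`; then the same sums force
`|x| = k * (b + 1) + k - 1`, i.e. `x` is exceptional.
-/

open Finset

theorem Finset.sum_le_sum_of_le_of_pair {ι M : Type*} [Fintype ι] [DecidableEq ι]
    [AddCommMonoid M] [PartialOrder M] [IsOrderedAddMonoid M] {f g : ι → M} {a b : ι}
    (hab : a ≠ b) (hpair : f a + f b ≤ g a + g b) (hrest : ∀ j, j ≠ a → j ≠ b → f j ≤ g j) :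
    ∑ j, f j ≤ ∑ j, g j := by
  rw [← sum_add_sum_compl {a, b} f, ← sum_add_sum_compl {a, b} g, sum_pair hab, sum_pair hab]
  refine add_le_add hpair (sum_le_sum fun j hj => ?_)
  simp only [mem_compl, mem_insert, mem_singleton, not_or] at hj
  exact hrest j hj.1 hj.2

theorem exists_le_sum_eq_of_le_sum {ι : Type*} [Fintype ι] (c : ι → ℕ) {n : ℕ}
    (hn : n ≤ ∑ i, c i) : ∃ g ≤ c, ∑ i, g i = n := by
  obtain ⟨g, hg, rfl⟩ := Finsupp.exists_le_degree_eq (Finsupp.equivFunOnFinite.symm c) n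
    (by simpa [Finsupp.degree_eq_sum] using hn)
  exact ⟨g, fun i => by simpa using hg i, (Finsupp.degree_eq_sum g).symm⟩

theorem card_filter_le_card_filter_of_le_comp {ι α : Type*} [Fintype ι] [Preorder α]
    [DecidableLE α] {z x : ι → α} (σ : Equiv.Perm ι) (h : ∀ i, z i ≤ x (σ i)) (a : α) :
    #{i | x i ≤ a} ≤ #{i | z i ≤ a} :=
  card_le_card_of_injOn σ.symm
    (fun i hi => by
      simp only [coe_filter, mem_univ, true_and, Set.mem_ofPred_eq] at hi ⊢
      exact (h _).trans (by simpa using hi))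
    σ.symm.injective.injOn

section Pre

variable {k : ℕ} {x y z : Fin (k + 1) → ℕ}

theorem pre_iff_exists_perm :
    Pre k z x ↔ ∃ σ : Equiv.Perm (Fin (k + 1)), ∀ i, z i ≤ x (σ i) := by
  constructor
  · intro h
    refine ⟨(Tuple.sort z).symm.trans (Tuple.sort x), fun i => ?_⟩
    simpa using h ((Tuple.sort z).symm i)
  · rintro ⟨σ, hσ⟩ j
    set a := (x ∘ Tuple.sort x) j
    rw [← Tuple.lt_card_le_iff_apply_le_of_monotone (Tuple.monotone_sort z)]
    calc (j : ℕ) < #{i | (x ∘ Tuple.sort x) i ≤ a} :=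
          (Tuple.lt_card_le_iff_apply_le_of_monotone (Tuple.monotone_sort x)).2 le_rfl
      _ ≤ #{i | x i ≤ a} :=
          card_filter_le_card_filter_of_le_comp (Tuple.sort x).symm (fun i => by simp) a
      _ ≤ #{i | z i ≤ a} := card_filter_le_card_filter_of_le_comp σ hσ a
      _ ≤ #{i | (z ∘ Tuple.sort z) i ≤ a} :=
          card_filter_le_card_filter_of_le_comp (Tuple.sort z) (fun _ => le_rfl) a

theorem Pre.of_le (h : ∀ i, z i ≤ x i) : Pre k z x :=
  pre_iff_exists_perm.2 ⟨1, h⟩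

theorem Pre.trans_le (h : Pre k z y) (hyx : ∀ i, y i ≤ x i) : Pre k z x :=
  let ⟨σ, hσ⟩ := pre_iff_exists_perm.1 h
  pre_iff_exists_perm.2 ⟨σ, fun i => (hσ i).trans (hyx _)⟩

theorem Pre.sum_le (h : Pre k z x) : ∑ i, z i ≤ ∑ i, x i := by
  obtain ⟨σ, hσ⟩ := pre_iff_exists_perm.1 h
  calc ∑ i, z i ≤ ∑ i, x (σ i) := sum_le_sum fun i _ => hσ i
    _ = ∑ i, x i := Equiv.sum_comp σ x

end Pre

section BVal

variable {k b : ℕ} {x y z : Fin (k + 1) → ℕ}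

theorem isBasic_zero : IsBasic k 0 0 :=
  ⟨by simp, fun _ => le_rfl, fun _ _ => Even.zero, fun h => absurd h (by simp)⟩

theorem bddAbove_isBasic_pre (hk : 1 ≤ k) (x : Fin (k + 1) → ℕ) :
    BddAbove {b | ∃ z, IsBasic k z b ∧ Pre k z x} := by
  refine ⟨∑ i, x i, fun b ⟨z, hz, hzx⟩ => ?_⟩
  calc b ≤ k * b := Nat.le_mul_of_pos_left b hk
    _ = ∑ i, z i := hz.1.symm
    _ ≤ ∑ i, x i := hzx.sum_le

theorem le_bVal (hk : 1 ≤ k) (hz : IsBasic k z b) (hzx : Pre k z x) : b ≤ BVal k x :=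
  le_csSup (bddAbove_isBasic_pre hk x) ⟨z, hz, hzx⟩

theorem exists_isBasic_bVal (hk : 1 ≤ k) (x : Fin (k + 1) → ℕ) :
    ∃ z, IsBasic k z (BVal k x) ∧ Pre k z x :=
  Nat.sSup_mem (s := {b | ∃ z, IsBasic k z b ∧ Pre k z x})
    ⟨0, 0, isBasic_zero, Pre.of_le fun _ => Nat.zero_le _⟩ (bddAbove_isBasic_pre hk x)

theorem bVal_mono (hk : 1 ≤ k) (h : ∀ i, y i ≤ x i) : BVal k y ≤ BVal k x := by
  obtain ⟨z, hz, hzy⟩ := exists_isBasic_bVal hk y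
  exact le_bVal hk hz (hzy.trans_le h)

end BVal

/-- The largest even number `≤ min t b`. -/
def evenCap (b t : ℕ) : ℕ := 2 * min (t / 2) (b / 2)

/-- For odd `b` and `t ≥ 1`, the largest odd number `≤ min t b`. -/
def oddCap (b t : ℕ) : ℕ := min (t - 1 + t % 2) b

/-- For odd `b`: the bound on coordinate `j` of `x` available to a basic vector with parameter `b`
matched below `x` with its only even coordinate matched to `x e`. -/
def mixedCap {n : ℕ} (b : ℕ) (e : Fin n) (x : Fin n → ℕ) (j : Fin n) : ℕ :=
  if j = e then evenCap b (x j) else oddCap b (x j)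

def moveKeeping {n : ℕ} (i : Fin n) (x : Fin n → ℕ) (j : Fin n) : ℕ :=
  if j = i then x j else x j - 1

section Caps

variable {k b : ℕ} {x z : Fin (k + 1) → ℕ}

theorem exists_isBasic_of_le_sum_evenCap (hb : Even b) (h : k * b ≤ ∑ i, evenCap b (x i)) :
    ∃ z, IsBasic k z b ∧ Pre k z x := by
  obtain ⟨c, rfl⟩ := hb.two_dvd
  have hkc : k * (2 * c) = 2 * (k * c) := mul_left_comm k 2 c
  obtain ⟨g, hg, hsum⟩ := exists_le_sum_eq_of_le_sum (fun i => min (x i / 2) c) (n := k * c)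
    (by simp only [evenCap, Nat.mul_div_cancel_left c two_pos, ← mul_sum] at h; omega)
  refine ⟨fun i => 2 * g i, ⟨?_, fun i => ?_, fun _ i => even_two_mul _,
    fun h => absurd h (by simp)⟩, Pre.of_le fun i => ?_⟩
  · rw [← mul_sum, hsum, hkc]
  all_goals have := hg i; dsimp only at this ⊢; omega

theorem sum_evenCap_add_two_le (hk : 1 ≤ k) (hb : Even b) (h : BVal k x < b) :
    ∑ i, evenCap b (x i) + 2 ≤ k * b := by
  have hlt : ∑ i, evenCap b (x i) < k * b := lt_of_not_ge fun hle =>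
    let ⟨_, hz, hzx⟩ := exists_isBasic_of_le_sum_evenCap hb hle
    h.not_ge (le_bVal hk hz hzx)
  obtain ⟨c, rfl⟩ := hb.two_dvd
  have hkc : k * (2 * c) = 2 * (k * c) := mul_left_comm k 2 c
  simp only [evenCap, ← mul_sum] at hlt ⊢
  omega

theorem exists_le_sum_mixedCap (hb : Odd b) (hz : IsBasic k z b) (hzx : Pre k z x) :
    ∃ e, (∀ j ≠ e, 1 ≤ x j) ∧ k * b ≤ ∑ j, mixedCap b e x j := by
  obtain ⟨σ, hσ⟩ := pre_iff_exists_perm.1 hzx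
  obtain ⟨e, he, huniq⟩ := hz.2.2.2 hb
  have hodd : ∀ j ≠ e, Odd (z j) := fun j hj => Nat.not_even_iff_odd.1 fun h => hj (huniq j h)
  rw [Nat.odd_iff] at hb
  refine ⟨σ e, fun j hj => ?_, ?_⟩
  · have h1 := hσ (σ.symm j)
    have h2 := Nat.odd_iff.1 (hodd (σ.symm j) (by rintro rfl; simp at hj))
    simp only [Equiv.apply_symm_apply] at h1
    omega
  · have hle : ∀ j, z j ≤ mixedCap b (σ e) x (σ j) := by
      intro j
      have h1 := hσ j
      have h2 := hz.2.1 j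
      by_cases hj : j = e
      · subst hj
        have h3 := Nat.even_iff.1 he
        simp only [mixedCap, if_true, evenCap]
        omega
      · have h3 := Nat.odd_iff.1 (hodd j hj)
        simp only [mixedCap, σ.injective.eq_iff, hj, if_false, oddCap]
        omega
    calc k * b = ∑ j, z j := hz.1.symm
      _ ≤ ∑ j, mixedCap b (σ e) x (σ j) := sum_le_sum fun j _ => hle j
      _ = ∑ j, mixedCap b (σ e) x j := Equiv.sum_comp σ _

end Caps

section Move

variable {k b : ℕ} {x : Fin (k + 1) → ℕ} {e i : Fin (k + 1)}

theorem moveKeeping_le (i : Fin (k + 1)) (x : Fin (k + 1) → ℕ) (j : Fin (k + 1)) :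
    moveKeeping i x j ≤ x j := by
  unfold moveKeeping; split_ifs <;> omega

theorem le_sum_evenCap_moveKeeping (hb : Odd b) (hpos : ∀ j ≠ e, 1 ≤ x j)
    (hkeep : (∃ j, Even (x j)) → Even (x i) ∧ ∀ j, Even (x j) → x i ≤ x j)
    (hsum : k * b ≤ ∑ j, mixedCap b e x j) :
    k * (b - 1) ≤ ∑ j, evenCap (b - 1) (moveKeeping i x j) := by
  rw [Nat.odd_iff] at hb
  have key : ∑ j, (mixedCap b e x j + if j = i then 1 else 0) ≤
      ∑ j, (evenCap (b - 1) (moveKeeping i x j) + 1) := by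
    by_cases hei : e = i
    · subst hei
      refine sum_le_sum fun j _ => ?_
      by_cases hj : j = e
      · subst hj
        simp only [mixedCap, moveKeeping, if_true, evenCap]
        omega
      · have := hpos j hj
        simp only [mixedCap, moveKeeping, hj, if_false, evenCap, oddCap]
        omega
    · refine sum_le_sum_of_le_of_pair hei ?_ fun j hje hji => ?_
      · have hxi := hpos i (Ne.symm hei)
        simp only [mixedCap, moveKeeping, hei, Ne.symm hei, if_true, if_false, evenCap, oddCap]
        rcases Nat.even_or_odd (x e) with he | he
        · obtain ⟨h1, h2⟩ := hkeep ⟨e, he⟩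
          have := h2 e he
          rw [Nat.even_iff] at he h1
          omega
        · rw [Nat.odd_iff] at he
          omega
      · have := hpos j hje
        simp only [mixedCap, moveKeeping, hje, hji, if_false, evenCap, oddCap]
        omega
  simp only [sum_add_distrib, sum_ite_eq', mem_univ, if_true, sum_const, card_univ,
    Fintype.card_fin, smul_eq_mul, mul_one] at key
  have : k * (b - 1) + k = k * b := by rw [← Nat.mul_succ]; congr 1; omega
  omega

theorem sum_mixedCap_moveKeeping_add_le (hb : Odd b) (hpos : ∀ j ≠ e, 1 ≤ moveKeeping i x j) :
    ∑ j, mixedCap b e (moveKeeping i x) j + (k + 1) ≤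
      ∑ j, evenCap (b + 1) (x j) + 2 + if Odd (x i) ∧ x i ≤ b then 1 else 0 := by
  have key : ∑ j, (mixedCap b e (moveKeeping i x) j + 1) ≤
      ∑ j, (evenCap (b + 1) (x j) + ((if j = e then 1 else 0) +
        if j = i then 1 + if Odd (x i) ∧ x i ≤ b then 1 else 0 else 0)) := by
    rw [Nat.odd_iff] at hb
    refine sum_le_sum fun j _ => ?_
    have hpos' := hpos j
    simp only [mixedCap, moveKeeping, evenCap, oddCap, Nat.odd_iff] at hpos' ⊢
    split_ifs at hpos' ⊢ <;> subst_vars <;> omega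
  simp only [sum_add_distrib, sum_ite_eq', mem_univ, if_true, sum_const, card_univ,
    Fintype.card_fin, smul_eq_mul, mul_one] at key
  omega

theorem evenCap_add_one_of_odd {t : ℕ} (ht : Odd t) (htb : t ≤ b) : evenCap b t + 1 = t := by
  rw [Nat.odd_iff] at ht
  unfold evenCap
  omega

end Move

section Bounds

variable {k : ℕ} {x : Fin (k + 1) → ℕ} {i : Fin (k + 1)}

theorem bVal_sub_one_le_bVal_moveKeeping (hk : 1 ≤ k) (hb : Odd (BVal k x))
    (hkeepEven : (∃ j, Even (x j)) → Even (x i) ∧ ∀ j, Even (x j) → x i ≤ x j) :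
    BVal k x - 1 ≤ BVal k (moveKeeping i x) := by
  obtain ⟨z, hz, hzx⟩ := exists_isBasic_bVal hk x
  obtain ⟨e, hpos, hsum⟩ := exists_le_sum_mixedCap hb hz hzx
  obtain ⟨z', hz', hz'x⟩ := exists_isBasic_of_le_sum_evenCap (Nat.Odd.sub_odd hb odd_one)
    (le_sum_evenCap_moveKeeping hb hpos hkeepEven hsum)
  exact le_bVal hk hz' hz'x

theorem bVal_moveKeeping_ne (hk : 1 ≤ k) (hb : Odd (BVal k x)) (hexc : ¬ Exceptional k x)
    (hkeepEven : (∃ j, Even (x j)) → Even (x i) ∧ ∀ j, Even (x j) → x i ≤ x j)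
    (hkeepOdd : (∀ j, Odd (x j)) → ∀ j, x j ≤ x i) :
    BVal k (moveKeeping i x) ≠ BVal k x := by
  intro heq
  obtain ⟨z, hz, hzx⟩ := exists_isBasic_bVal hk (moveKeeping i x)
  rw [heq] at hz
  set b := BVal k x
  obtain ⟨e, hpos, hsum⟩ := exists_le_sum_mixedCap hb hz hzx
  have hcap := sum_evenCap_add_two_le hk hb.add_one (lt_add_one b)
  have hmix := sum_mixedCap_moveKeeping_add_le hb hpos
  have hkb : k * (b + 1) = k * b + k := mul_add_one k b
  split_ifs at hmix with hxi
  · obtain ⟨hxi, hxib⟩ := hxi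
    have hodd : ∀ j, Odd (x j) := fun j => Nat.not_even_iff_odd.1 fun hj =>
      Nat.not_even_iff_odd.2 hxi (hkeepEven ⟨j, hj⟩).1
    have hle : ∀ j, x j ≤ b := fun j => (hkeepOdd hodd j).trans hxib
    have hsumx : ∑ j, evenCap (b + 1) (x j) + (k + 1) = ∑ j, x j := by
      calc ∑ j, evenCap (b + 1) (x j) + (k + 1) = ∑ j, (evenCap (b + 1) (x j) + 1) := by
            simp only [sum_add_distrib, sum_const, card_univ, Fintype.card_fin, smul_eq_mul,
              mul_one]
        _ = ∑ j, x j := sum_congr rfl fun j _ =>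
            evenCap_add_one_of_odd (hodd j) ((hle j).trans b.le_succ)
    exact hexc ⟨b + 1, hb.add_one, hodd, fun j => Nat.lt_succ_of_le (hle j), by omega⟩
  · omega

end Bounds

theorem stmt16 (k : ℕ) (hk : 2 ≤ k) (x x' : Fin (k+1) → ℕ)
    (hodd : Odd (BVal k x)) (hexc : ¬ Exceptional k x) (h : MMove k x x') :
    BVal k x' = BVal k x - 1 := by
  obtain ⟨i, -, hkeepEven, hkeepOdd, hx'⟩ := h
  obtain rfl : x' = moveKeeping i x := funext hx'
  have hk1 : 1 ≤ k := by omega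
  have hlower := bVal_sub_one_le_bVal_moveKeeping hk1 hodd hkeepEven
  have hupper := bVal_mono hk1 (moveKeeping_le i x)
  have hne := bVal_moveKeeping_ne hk1 hodd hexc hkeepEven hkeepOdd
  omega
end
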